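/- arXiv:math/0303311 — 2 statements merged into one kernel-verified Lean document; each statement's English description precedes it below -/
import Mathlib

section
/- If d ≥ 2 is such that d | pq and H(p,q,d) ≅ B(d,1) = K_d^+ (the complete digraph on d vertices with loops, which is a line digraph), then d | p and d | q; combined with pq/d = d (the vertex count), this forces p = q = d. Hence B(d,1) has a unique OTIS layout. -/
/-- The OTIS transpose map: for a = iq+j (0 ≤ i < p, 0 ≤ j < q), tau a = (q-1-j)p + (p-1-i). -/
def tau (p q a : ℕ) : ℕ := (q - 1 - a % q) * p + (p - 1 - a / q)

/-- Arc multiplicity from vertex u to vertex v in H(p,q,d). -/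
def mult (p q d u v : ℕ) : ℕ :=
  ((Finset.range d).filter (fun r => tau p q (d * u + r) / d = v)).card

/-- There is an arc from u to v in H(p,q,d). -/
def arc (p q d u v : ℕ) : Prop := ∃ r < d, tau p q (d * u + r) / d = v

/-!
Since `p * q = d * d`, vertex `0` of `H(p,q,d)` is the block `[0, d)` and vertex `d - 1` the block
`[d*d - d, d*d)`. The transpose sends `0` to `d*d - 1`; if `p < d` it also sends `1` to
`d*d - 1 - p`, and if `q < d` it sends `q` to `d*d - 2`. Either way two arcs run from `0` to `d - 1`,
contradicting `K_d^+`. Hence `d ≤ p`, `d ≤ q`, and `p * q = d * d` forces `p = q = d`.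
-/

lemma tau_zero (p : ℕ) {q : ℕ} (hq : 0 < q) : tau p q 0 = p * q - 1 := by
  obtain ⟨q, rfl⟩ := Nat.exists_eq_add_of_lt hq
  simp only [tau, Nat.zero_mod, Nat.zero_div]
  grind

lemma tau_one (p : ℕ) {q : ℕ} (hq : 1 < q) : tau p q 1 = p * q - 1 - p := by
  obtain ⟨q, rfl⟩ := Nat.exists_eq_add_of_lt hq
  simp only [tau, Nat.mod_eq_of_lt hq, Nat.div_eq_of_lt hq]
  grind

lemma tau_self {p q : ℕ} (hp : 1 < p) (hq : 0 < q) : tau p q q = p * q - 2 := by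
  simp only [tau, Nat.mod_self, Nat.div_self hq]
  obtain ⟨p, rfl⟩ := Nat.exists_eq_add_of_lt hp
  obtain ⟨q, rfl⟩ := Nat.exists_eq_add_of_lt hq
  grind

lemma div_eq_pred_of_le_of_lt {d m : ℕ} (h₁ : d * d - d ≤ m) (h₂ : m < d * d) :
    m / d = d - 1 := by
  rcases Nat.eq_zero_or_pos d with rfl | hd
  · simp
  apply Nat.div_eq_of_lt_le
  · rwa [Nat.sub_one_mul]
  · rwa [Nat.sub_one_add_one hd.ne']

lemma one_lt_mult {p q d u v a b : ℕ} (hab : a ≠ b) (ha : a < d) (hb : b < d)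
    (hta : tau p q (d * u + a) / d = v) (htb : tau p q (d * u + b) / d = v) :
    1 < mult p q d u v := by
  have hsub : {a, b} ⊆ (Finset.range d).filter (fun r => tau p q (d * u + r) / d = v) := by
    simp [Finset.insert_subset_iff, *]
  exact (Finset.card_pair hab).symm.trans_le (Finset.card_le_card hsub)

lemma le_left_of_mult_eq_one {p q d : ℕ} (hpq : p * q = d * d)
    (h : mult p q d 0 (d - 1) = 1) : d ≤ p := by
  by_contra! hp
  have hq : 1 < q := by
    by_contra! hq
    nlinarith [Nat.mul_le_mul_left p hq]
  have hd : 1 < d := by nlinarith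
  have hdd := Nat.le_mul_self d
  refine (one_lt_mult (a := 0) (b := 1) zero_ne_one (by omega) hd ?_ ?_).ne' h
  · rw [mul_zero, zero_add, tau_zero p (by omega), hpq]
    exact div_eq_pred_of_le_of_lt (by omega) (by omega)
  · rw [mul_zero, zero_add, tau_one p hq, hpq]
    exact div_eq_pred_of_le_of_lt (by omega) (by omega)

lemma le_right_of_mult_eq_one {p q d : ℕ} (hpq : p * q = d * d)
    (h : mult p q d 0 (d - 1) = 1) : d ≤ q := by
  by_contra! hq
  have hp : 1 < p := by
    by_contra! hp
    nlinarith [Nat.mul_le_mul_right q hp]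
  have hq₀ : 0 < q := by
    by_contra! hq₀
    nlinarith
  have hdd := Nat.le_mul_self d
  refine (one_lt_mult (a := 0) (b := q) hq₀.ne (by omega) hq ?_ ?_).ne' h
  · rw [mul_zero, zero_add, tau_zero p hq₀, hpq]
    exact div_eq_pred_of_le_of_lt (by omega) (by omega)
  · rw [mul_zero, zero_add, tau_self hp hq₀, hpq]
    exact div_eq_pred_of_le_of_lt (by omega) (by omega)

theorem stmt_16_general (p q d : ℕ) (hd : 1 < d) (hdiv : d ∣ p * q)
    (hcard : p * q / d = d)
    (hK : ∀ u < d, ∀ v < d, mult p q d u v = 1) :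
    d ∣ p ∧ d ∣ q ∧ p = d ∧ q = d := by
  have hpq : p * q = d * d := by rw [← Nat.div_mul_cancel hdiv, hcard]
  have hK₀ := hK 0 (by omega) (d - 1) (by omega)
  have hdp := le_left_of_mult_eq_one hpq hK₀
  have hdq := le_right_of_mult_eq_one hpq hK₀
  have hp : p = d := by nlinarith
  have hq : q = d := by subst hp; nlinarith
  subst hp hq
  exact ⟨dvd_rfl, dvd_rfl, rfl, rfl⟩

theorem stmt_16 (p q d : ℕ) (hp : 1 < p) (hq : 1 < q) (hd : 1 < d) (hdiv : d ∣ p * q)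
    (hcard : p * q / d = d)
    (hK : ∀ u < d, ∀ v < d, mult p q d u v = 1) :
    d ∣ p ∧ d ∣ q ∧ p = d ∧ q = d :=
  stmt_16_general p q d hd hdiv hcard hK
end

section
/- If gcd(p',q') = 1 (with p'+q'-1 = n), then the permutation g on [0,n-1] is an n-cycle: the orbit of any element is all of [0,n-1]. -/
/-!
Compare `g` with the rotation `x ↦ (x + p') % (p' + q')` of `{0, …, n}`: `g` agrees with it except
at `q' - 1`, which the rotation sends to `n` and `g` sends straight on to the image `p' - 1` of `n`.
So `g` is the rotation with the point `n` skipped. Since `gcd(p', p' + q') = 1` the rotation is a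
single cycle, and skipping one point of a cycle leaves a cycle.
-/

def g (p' q' i : ℕ) : ℕ :=
  if i + 1 < q' then i + p' else if i + 1 = q' then p' - 1 else i - q'

open Function Set

section InducedMap

variable {α : Type*} {S : Set α} {h f : α → α} {s : α}

theorem exists_iterate_eq_iterate_of_skip (hS : MapsTo h S S) (hs : h s ≠ s)
    (hf_ne : ∀ x ∈ S, x ≠ s → h x ≠ s → f x = h x)
    (hf_eq : ∀ x ∈ S, x ≠ s → h x = s → f x = h s)
    {x : α} (hx : x ∈ S) (hxs : x ≠ s) (k : ℕ) (hk : h^[k] x ≠ s) :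
    ∃ m, f^[m] x = h^[k] x := by
  have hf : MapsTo f (S \ {s}) (S \ {s}) := by
    rintro y ⟨hy, hys : y ≠ s⟩
    by_cases hhy : h y = s
    · rw [hf_eq y hy hys hhy]
      exact ⟨hS (hhy ▸ hS hy), hs⟩
    · rw [hf_ne y hy hys hhy]
      exact ⟨hS hy, hhy⟩
  -- In the second case the `h`-orbit sits at `s`, which `f` jumps over at its next step.
  have tracks : ∀ k, ∃ m, f^[m] x = h^[k] x ∨ (h (f^[m] x) = s ∧ h^[k] x = s) := by
    intro k
    induction k with
    | zero => exact ⟨0, .inl rfl⟩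
    | succ k ih =>
      obtain ⟨m, hm⟩ := ih
      obtain ⟨hy, hys : f^[m] x ≠ s⟩ := hf.iterate m ⟨hx, hxs⟩
      simp only [iterate_succ_apply']
      rcases hm with hm | ⟨hhy, hks⟩
      · by_cases hhy : h (f^[m] x) = s
        · exact ⟨m, .inr ⟨hhy, hm ▸ hhy⟩⟩
        · exact ⟨m + 1, .inl (by rw [iterate_succ_apply', hf_ne _ hy hys hhy, hm])⟩
      · exact ⟨m + 1, .inl (by rw [iterate_succ_apply', hf_eq _ hy hys hhy, hks])⟩
  obtain ⟨m, hm | ⟨-, hks⟩⟩ := tracks k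
  · exact ⟨m, hm⟩
  · exact absurd hks hk

end InducedMap

section Rotation

def addMod (a m x : ℕ) : ℕ := (x + a) % m

theorem addMod_iterate {a m x : ℕ} (hx : x < m) (k : ℕ) :
    (addMod a m)^[k] x = (x + k * a) % m := by
  induction k with
  | zero => simp [Nat.mod_eq_of_lt hx]
  | succ k ih =>
    rw [iterate_succ_apply', ih, addMod, Nat.mod_add_mod, add_one_mul, add_assoc]

theorem exists_addMod_iterate_eq {a m x y : ℕ} (ha : a.Coprime m) (hx : x < m) (hy : y < m) :
    ∃ k, (addMod a m)^[k] x = y := by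
  obtain ⟨k, -, hk⟩ := Nat.exists_mul_mod_eq_of_coprime (y + (m - x)) ha (by omega)
  refine ⟨k, ?_⟩
  rw [addMod_iterate hx, mul_comm, Nat.add_mod, hk, ← Nat.add_mod]
  rw [show x + (y + (m - x)) = y + m by omega, Nat.add_mod_right, Nat.mod_eq_of_lt hy]

end Rotation

section FirstReturn

variable {p' q' x : ℕ}

theorem g_eq_addMod (hx : x < p' + q' - 1) (hrot : addMod p' (p' + q') x ≠ p' + q' - 1) :
    g p' q' x = addMod p' (p' + q') x := by
  unfold g addMod at *
  split_ifs with h₁ h₂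
  · rw [Nat.mod_eq_of_lt (by omega)]
  · rw [Nat.mod_eq_of_lt (by omega)] at hrot; omega
  · rw [Nat.mod_eq_sub_mod (by omega), Nat.mod_eq_of_lt (by omega)]; omega

theorem g_eq_addMod_last (hp : 1 ≤ p') (hx : x < p' + q' - 1)
    (hrot : addMod p' (p' + q') x = p' + q' - 1) :
    g p' q' x = addMod p' (p' + q') (p' + q' - 1) := by
  unfold g addMod at *
  rw [Nat.mod_eq_sub_mod (by omega), Nat.mod_eq_of_lt (by omega)]
  split_ifs with h₁ h₂
  · rw [Nat.mod_eq_of_lt (by omega)] at hrot; omega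
  · omega
  · rw [Nat.mod_eq_sub_mod (by omega), Nat.mod_eq_of_lt (by omega)] at hrot; omega

end FirstReturn

theorem stmt_18 (p' q' n : ℕ) (hp : 1 ≤ p') (hq : 1 ≤ q') (hn : p' + q' - 1 = n)
    (hl : Nat.gcd p' q' = 1) :
    ∀ i < n, ∀ j < n, ∃ k : ℕ, (g p' q')^[k] i = j := by
  intro i hi j hj
  subst hn
  have hcop : p'.Coprime (p' + q') := by rwa [Nat.coprime_self_add_right]
  obtain ⟨k, hk⟩ := exists_addMod_iterate_eq hcop (x := i) (y := j) (by omega) (by omega)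
  have hlast : addMod p' (p' + q') (p' + q' - 1) ≠ p' + q' - 1 := by
    unfold addMod
    rw [Nat.mod_eq_sub_mod (by omega), Nat.mod_eq_of_lt (by omega)]
    omega
  obtain ⟨m, hm⟩ := exists_iterate_eq_iterate_of_skip (S := Iio (p' + q'))
    (h := addMod p' (p' + q')) (s := p' + q' - 1)
    (fun _ _ => Nat.mod_lt _ (by omega)) hlast
    (fun _ hy _ => g_eq_addMod (by simp at hy; omega))
    (fun _ hy _ => g_eq_addMod_last hp (by simp at hy; omega))
    (show i < p' + q' by omega) hi.ne k (by omega)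
  exact ⟨m, hm.trans hk⟩
end
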